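/- Invariance for the follower gap (Lemma on set U): let (ξ₁, ζ₁, ξ₂, ζ₂) be a C¹ solution on [ť, T) of the difference system ξ̇₂ = ζ₂, ζ̇₂ = -α(V(ξ₂) - V(ξ₁)) - αζ₂ - β(ζ₂/ξ₂² - ζ₁/ξ₁²), and suppose for all t ∈ [ť, T): ζ₁(t) > 0, ξ₁(t) > δ₁ > 0, and 0 < ξ₂(t) < δ₂/2 where δ₂ ≤ δ₁. Then if ζ₂(t₁) > 0 for some t₁ ∈ [ť, T), ζ₂(t) > 0 for all t ∈ [t₁, T). (At any zero t₀ of ζ₂: ζ̇₂(t₀) = -α(V(ξ₂(t₀)) - V(ξ₁(t₀))) + βζ₁(t₀)/ξ₁(t₀)² > 0, since ξ₂(t₀) < δ₂/2 < δ₁ < ξ₁(t₀) and V is strictly increasing.) -/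
import Mathlib


noncomputable def V (x : ℝ) : ℝ := Real.tanh (x - 2) + Real.tanh 2

lemma tanh_strictMono : StrictMono Real.tanh := by
  intro a b hab
  rw [Real.tanh_eq_sinh_div_cosh, Real.tanh_eq_sinh_div_cosh,
    div_lt_div_iff₀ (Real.cosh_pos a) (Real.cosh_pos b)]
  have h : Real.sinh (a - b) < 0 := Real.sinh_neg_iff.mpr (by linarith)
  rw [Real.sinh_sub] at h
  linarith

lemma V_strictMono : StrictMono V := fun a b hab => by
  unfold V
  have := tanh_strictMono (show a - 2 < b - 2 by linarith)
  linarith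

theorem follower_gap_invariance (α β δ₁ δ₂ tc T : ℝ)
    (hα : 0 < α) (hβ : 0 < β) (hδ₁ : 0 < δ₁) (hδ₂ : 0 < δ₂) (hδ : δ₂ ≤ δ₁)
    (ξ₁ ζ₁ ξ₂ ζ₂ : ℝ → ℝ)
    (hζ₁pos : ∀ t ∈ Set.Ico tc T, 0 < ζ₁ t)
    (hξ₁ : ∀ t ∈ Set.Ico tc T, δ₁ < ξ₁ t)
    (hξ₂pos : ∀ t ∈ Set.Ico tc T, 0 < ξ₂ t)
    (hξ₂small : ∀ t ∈ Set.Ico tc T, ξ₂ t < δ₂ / 2)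
    (hξ₂' : ∀ t ∈ Set.Ico tc T, HasDerivWithinAt ξ₂ (ζ₂ t) (Set.Ico tc T) t)
    (hζ₂' : ∀ t ∈ Set.Ico tc T,
      HasDerivWithinAt ζ₂
        (-α * (V (ξ₂ t) - V (ξ₁ t)) - α * ζ₂ t
          - β * (ζ₂ t / (ξ₂ t) ^ 2 - ζ₁ t / (ξ₁ t) ^ 2))
        (Set.Ico tc T) t) :
    ∀ t₁ ∈ Set.Ico tc T, 0 < ζ₂ t₁ →
      ∀ t ∈ Set.Ico tc T, t₁ ≤ t → 0 < ζ₂ t := by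
  intro t₁ ht₁ hζ₂t₁ t ht htt₁
  by_contra hneg
  push_neg at hneg
  -- t is a time in [t₁, T) with ζ₂ t ≤ 0
  set t' := t with ht'def
  have ht'mem : t' ∈ Set.Ico tc T := ht
  have ht'le : ζ₂ t' ≤ 0 := hneg
  have hsub : Set.Icc t₁ t' ⊆ Set.Ico tc T := by
    intro s hs
    exact ⟨le_trans ht₁.1 hs.1, lt_of_le_of_lt hs.2 ht'mem.2⟩
  -- ζ₂ is continuous on [t₁, t']
  have hcont : ContinuousOn ζ₂ (Set.Icc t₁ t') := by
    intro s hs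
    exact ((hζ₂' s (hsub hs)).continuousWithinAt).mono hsub
  -- the set of zeros/negatives of ζ₂ in [t₁, t']
  set S : Set ℝ := Set.Icc t₁ t' ∩ ζ₂ ⁻¹' Set.Iic 0 with hSdef
  have hSclosed : IsClosed S := hcont.preimage_isClosed_of_isClosed isClosed_Icc isClosed_Iic
  have hSne : S.Nonempty := ⟨t', ⟨⟨htt₁, le_refl _⟩, ht'le⟩⟩
  have hSbdd : BddBelow S := ⟨t₁, fun s hs => hs.1.1⟩
  set t₀ := sInf S with ht₀def
  have ht₀S : t₀ ∈ S := hSclosed.csInf_mem hSne hSbdd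
  have ht₀Icc : t₀ ∈ Set.Icc t₁ t' := ht₀S.1
  have ht₀mem : t₀ ∈ Set.Ico tc T := hsub ht₀Icc
  have hζ₂t₀ : ζ₂ t₀ ≤ 0 := ht₀S.2
  have ht₁lt : t₁ < t₀ := by
    rcases lt_or_eq_of_le ht₀Icc.1 with h | h
    · exact h
    · exfalso; rw [← h] at hζ₂t₀; linarith
  -- ζ₂ is positive on [t₁, t₀)
  have hpos : ∀ s ∈ Set.Ico t₁ t₀, 0 < ζ₂ s := by
    intro s hs
    by_contra hc
    push_neg at hc
    have : s ∈ S := ⟨⟨hs.1, le_trans hs.2.le ht₀Icc.2⟩, hc⟩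
    exact absurd (csInf_le hSbdd this) (not_le.mpr hs.2)
  -- The derivative value at t₀
  set D := -α * (V (ξ₂ t₀) - V (ξ₁ t₀)) - α * ζ₂ t₀
      - β * (ζ₂ t₀ / (ξ₂ t₀) ^ 2 - ζ₁ t₀ / (ξ₁ t₀) ^ 2) with hDdef
  -- D > 0
  have hDpos : 0 < D := by
    have hV : V (ξ₂ t₀) < V (ξ₁ t₀) := by
      apply V_strictMono
      have h1 := hξ₂small t₀ ht₀mem
      have h2 := hξ₁ t₀ ht₀mem
      linarith
    have hζ₁ := hζ₁pos t₀ ht₀mem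
    have hξ₁pos : 0 < ξ₁ t₀ := lt_trans hδ₁ (hξ₁ t₀ ht₀mem)
    have hξ₂p := hξ₂pos t₀ ht₀mem
    have h1 : 0 < β * (ζ₁ t₀ / (ξ₁ t₀) ^ 2) :=
      mul_pos hβ (div_pos hζ₁ (pow_pos hξ₁pos 2))
    have h2 : 0 ≤ -α * ζ₂ t₀ := mul_nonneg_of_nonpos_of_nonpos (by linarith) hζ₂t₀
    have h3 : 0 ≤ -β * (ζ₂ t₀ / (ξ₂ t₀) ^ 2) :=
      mul_nonneg_of_nonpos_of_nonpos (by linarith)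
        (div_nonpos_iff.mpr (Or.inr ⟨hζ₂t₀, (pow_pos hξ₂p 2).le⟩))
    have h4 : 0 < -α * (V (ξ₂ t₀) - V (ξ₁ t₀)) := by
      apply mul_pos_of_neg_of_neg (by linarith) (by linarith)
    rw [hDdef]; ring_nf; ring_nf at h1 h2 h3 h4; linarith
  -- but D ≤ 0 via left difference quotients
  have hslope : Filter.Tendsto (slope ζ₂ t₀) (nhdsWithin t₀ (Set.Ico tc T \ {t₀}))
      (nhds D) := by
    have := hζ₂' t₀ ht₀mem
    rw [hasDerivWithinAt_iff_tendsto_slope] at this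
    exact this
  have hfle : Filter.Tendsto (slope ζ₂ t₀) (nhdsWithin t₀ (Set.Ico t₁ t₀)) (nhds D) := by
    apply hslope.mono_left
    apply nhdsWithin_mono
    intro s hs
    exact ⟨⟨le_trans ht₁.1 hs.1, lt_trans hs.2 ht₀mem.2⟩, ne_of_lt hs.2⟩
  have hNeBot : (nhdsWithin t₀ (Set.Ico t₁ t₀)).NeBot := by
    rw [← mem_closure_iff_nhdsWithin_neBot, closure_Ico (ne_of_lt ht₁lt)]
    exact ⟨ht₁lt.le, le_refl _⟩
  have hDle : D ≤ 0 := by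
    refine le_of_tendsto hfle ?_
    filter_upwards [self_mem_nhdsWithin] with s hs
    have hnum : 0 < ζ₂ s - ζ₂ t₀ := by
      have := hpos s hs
      linarith
    have hden : s - t₀ < 0 := by linarith [hs.2]
    rw [slope_def_field]
    exact le_of_lt (div_neg_of_pos_of_neg hnum (by linarith))
  linarith
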